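/- Let η₁, η₂ > 0 be real numbers. The characteristic polynomial of the 3×3 matrix B = B(η₁, η₂) equals P₃(X) = X³ + (η₁ + η₂ + 3)X² + (2 + η₁ + (5/4)η₂ + (3/4)η₂η₁)X − (1/4)η₂η₁ − (3/4)η₂, and P₃ has exactly one nonnegative real root; this root is positive and simple. (Spectral core of Theorem 3 for N = 3.) -/

import Mathlib

/-!
The characteristic polynomial of a 3×3 matrix is `X³ - (tr B) X² + (Σ principal 2-minors) X - det B`;
evaluating these invariants for `B(η₁, η₂)` gives `P₃`. For `η₁, η₂ > 0` the cubic `P₃` has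
nonnegative coefficients except for a negative constant term, so it is strictly increasing on
`[0, ∞)` with `P₃(0) < 0`: by the intermediate value theorem it has exactly one nonnegative root,
which is positive, and `P₃'` is positive there.
-/

open Polynomial Set

theorem Matrix.charpoly_fin_three {R : Type*} [CommRing R] (M : Matrix (Fin 3) (Fin 3) R) :
    M.charpoly = X ^ 3 - C M.trace * X ^ 2
      + C (M 0 0 * M 1 1 - M 0 1 * M 1 0 + M 0 0 * M 2 2 - M 0 2 * M 2 0
          + M 1 1 * M 2 2 - M 1 2 * M 2 1) * X
      - C M.det := by
  simp only [Matrix.charpoly, Matrix.det_fin_three, Matrix.trace_fin_three, Matrix.charmatrix_apply,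
    Matrix.diagonal_apply, map_add, map_sub, map_mul, Fin.reduceEq, ↓reduceIte]
  ring

theorem exists_pos_root_unique_of_strictMonoOn {f : ℝ → ℝ} (hf : Continuous f)
    (hmono : StrictMonoOn f (Ici 0)) (h0 : f 0 < 0) {t : ℝ} (ht : 0 ≤ t) (hft : 0 < f t) :
    ∃ x, 0 < x ∧ f x = 0 ∧ ∀ y, 0 ≤ y → f y = 0 → y = x := by
  obtain ⟨x, ⟨hx0, -⟩, hfx⟩ := intermediate_value_Icc ht hf.continuousOn ⟨h0.le, hft.le⟩
  have hx_ne : x ≠ 0 := by rintro rfl; exact h0.ne hfx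
  exact ⟨x, lt_of_le_of_ne hx0 hx_ne.symm, hfx,
    fun y hy hfy => hmono.injOn (mem_Ici.2 hy) (mem_Ici.2 hx0) (hfy.trans hfx.symm)⟩

section Cubic

variable {a b c : ℝ}

theorem eval_cubic (x : ℝ) :
    (X ^ 3 + C a * X ^ 2 + C b * X + C c).eval x = x ^ 3 + a * x ^ 2 + b * x + c := by
  simp

theorem eval_derivative_cubic (x : ℝ) :
    (X ^ 3 + C a * X ^ 2 + C b * X + C c).derivative.eval x = 3 * x ^ 2 + 2 * a * x + b := by
  simp only [derivative_add, derivative_X_pow, derivative_C_mul_X_pow, derivative_C_mul_X,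
    derivative_C, eval_zero, eval_add, eval_mul, eval_pow, eval_C, eval_X]
  ring

theorem strictMonoOn_eval_cubic (ha : 0 ≤ a) (hb : 0 < b) :
    StrictMonoOn (fun x => (X ^ 3 + C a * X ^ 2 + C b * X + C c).eval x) (Ici 0) := by
  intro x (hx : 0 ≤ x) y (hy : 0 ≤ y) hxy
  simp only [eval_cubic]
  have hfactor : y ^ 3 + a * y ^ 2 + b * y + c - (x ^ 3 + a * x ^ 2 + b * x + c)
      = (y - x) * (y ^ 2 + x * y + x ^ 2 + a * (x + y) + b) := by ring
  have : 0 < (y - x) * (y ^ 2 + x * y + x ^ 2 + a * (x + y) + b) :=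
    mul_pos (sub_pos.2 hxy) (by positivity)
  linarith

/-- As `(1 - c)³ ≥ 1 - c`, the value is at least `1`. -/
theorem eval_cubic_one_sub_pos (ha : 0 ≤ a) (hb : 0 ≤ b) (hc : c ≤ 0) :
    0 < (X ^ 3 + C a * X ^ 2 + C b * X + C c).eval (1 - c) := by
  rw [eval_cubic]
  have ht : 1 ≤ 1 - c := by linarith
  have hcube : 1 - c ≤ (1 - c) ^ 3 := le_self_pow₀ ht (by norm_num)
  nlinarith [mul_nonneg ha (sq_nonneg (1 - c)), mul_nonneg hb (by linarith : (0 : ℝ) ≤ 1 - c)]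

theorem cubic_exists_pos_root_unique (ha : 0 ≤ a) (hb : 0 < b) (hc : c < 0) :
    ∃ x : ℝ, 0 < x ∧ (X ^ 3 + C a * X ^ 2 + C b * X + C c).IsRoot x ∧
      (X ^ 3 + C a * X ^ 2 + C b * X + C c).derivative.eval x ≠ 0 ∧
      ∀ y : ℝ, 0 ≤ y → (X ^ 3 + C a * X ^ 2 + C b * X + C c).IsRoot y → y = x := by
  obtain ⟨x, hx, hroot, hunique⟩ := exists_pos_root_unique_of_strictMonoOn
    (Polynomial.continuous _) (strictMonoOn_eval_cubic ha hb) (by simpa using hc)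
    (by linarith) (eval_cubic_one_sub_pos ha hb.le hc.le)
  refine ⟨x, hx, hroot, ?_, hunique⟩
  rw [eval_derivative_cubic]
  positivity

end Cubic

noncomputable def boundedLLEResidue (η₁ η₂ : ℝ) : Matrix (Fin 3) (Fin 3) ℝ :=
  !![-1, 2, 0;
     (η₁ + 1) / 2, -η₁ - 1, (η₁ + 3) / 2;
     0, η₂ / 2, -η₂ - 1]

theorem charpoly_boundedLLEResidue (η₁ η₂ : ℝ) :
    (boundedLLEResidue η₁ η₂).charpoly = X ^ 3 + C (η₁ + η₂ + 3) * X ^ 2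
        + C (2 + η₁ + (5 / 4) * η₂ + (3 / 4) * η₂ * η₁) * X
        + C (-(1 / 4) * η₂ * η₁ - (3 / 4) * η₂) := by
  set B := boundedLLEResidue η₁ η₂
  have htrace : -B.trace = η₁ + η₂ + 3 := by
    simp only [B, boundedLLEResidue, Matrix.trace_fin_three, Matrix.of_apply, Matrix.cons_val', Matrix.cons_val_zero,
      Matrix.cons_val_one, Matrix.cons_val, Matrix.cons_val_fin_one]; ring
  have hminors : B 0 0 * B 1 1 - B 0 1 * B 1 0 + B 0 0 * B 2 2 - B 0 2 * B 2 0
      + B 1 1 * B 2 2 - B 1 2 * B 2 1 = 2 + η₁ + (5 / 4) * η₂ + (3 / 4) * η₂ * η₁ := by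
    simp only [B, boundedLLEResidue, Matrix.of_apply, Matrix.cons_val', Matrix.cons_val_zero,
      Matrix.cons_val_one, Matrix.cons_val, Matrix.cons_val_fin_one]; ring
  have hdet : -B.det = -(1 / 4) * η₂ * η₁ - (3 / 4) * η₂ := by
    simp only [B, boundedLLEResidue, Matrix.det_fin_three, Matrix.of_apply, Matrix.cons_val', Matrix.cons_val_zero,
      Matrix.cons_val_one, Matrix.cons_val, Matrix.cons_val_fin_one]; ring
  rw [Matrix.charpoly_fin_three, hminors, sub_eq_add_neg _ (C B.det), ← map_neg, hdet,
    ← neg_neg B.trace, htrace, map_neg]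
  ring

theorem boundedLLE_N3_charpoly_and_root (η₁ η₂ : ℝ) (h₁ : 0 < η₁) (h₂ : 0 < η₂)
    (P : Polynomial ℝ)
    (hP : P = X ^ 3 + C (η₁ + η₂ + 3) * X ^ 2
        + C (2 + η₁ + (5 / 4) * η₂ + (3 / 4) * η₂ * η₁) * X
        + C (-(1 / 4) * η₂ * η₁ - (3 / 4) * η₂)) :
    Matrix.charpoly
        (!![-1, 2, 0;
            (η₁ + 1) / 2, -η₁ - 1, (η₁ + 3) / 2;
            0, η₂ / 2, -η₂ - 1] : Matrix (Fin 3) (Fin 3) ℝ) = P ∧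
    ∃ x : ℝ, 0 < x ∧ P.IsRoot x ∧ P.derivative.eval x ≠ 0 ∧
      ∀ y : ℝ, 0 ≤ y → P.IsRoot y → y = x := by
  subst hP
  refine ⟨charpoly_boundedLLEResidue η₁ η₂, cubic_exists_pos_root_unique ?_ ?_ ?_⟩
  · positivity
  · positivity
  · nlinarith [mul_pos h₂ h₁]
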